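/- Fix M ≥ 2, a function F : (0,∞) → ℝ and σ > 0. Let λ := e^{2πi/M} and define Ω := F(σ) + Σ_{j=1}^{M−1} F(σ·|1 − λ^j|)·(1 − cos(2πj/M)), a real number. Then the curves z_0(t) := 0 and z_r(t) := σ·λ^r·e^{iΩt} for r = 1, …, M solve the asymptotic vortex equations for N = M + 1 vortices: ż_r(t) = i·Σ_{s≠r} F(|z_r(t) − z_s(t)|)·(z_r(t) − z_s(t)) for all t and all r ∈ {0, 1, …, M}. In other words, M vortices at the vertices of a regular M-gon of circumradius σ rotate rigidly with angular frequency Ω about an (M+1)-th vortex which remains fixed at the polygon's centre. -/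

import Mathlib

/-!
Every vortex of the filled polygon sees the same configuration up to a rotation by a power
of `λ`. The central vortex feels the forces `-F(σ) σ λ^r`, which cancel because the `M`-th roots
of unity sum to zero; the vortex at `σ λ^r` feels `i Ω σ λ^r`, where the polygon sum defining `Ω`
is real because complex conjugation reverses the polygon. Since the equations are equivariant
under rotations, the configuration rotating rigidly with frequency `Ω` is a solution.
-/

open Finset

namespace Function.Periodic

variable {α : Type*} [AddCommMonoid α] {f : ℕ → α} {n : ℕ}

theorem sum_range_add (hf : Periodic f n) (a : ℕ) :
    ∑ j ∈ range n, f (a + j) = ∑ j ∈ range n, f j := by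
  induction a with
  | zero => simp
  | succ a ih =>
    cases n with
    | zero => simp
    | succ m =>
      rw [← ih, sum_range_succ, sum_range_succ', add_zero,
        show a + 1 + m = a + (m + 1) from by omega, hf]
      simp only [add_assoc, add_comm 1]

theorem sum_range_reflect (hf : Periodic f n) :
    ∑ j ∈ range n, f (n - j) = ∑ j ∈ range n, f j := by
  cases n with
  | zero => simp
  | succ m =>
    rw [← hf.sum_range_add 1, ← Finset.sum_range_reflect]
    refine sum_congr rfl fun j hj => ?_
    rw [mem_range] at hj
    congr 1
    omega

end Function.Periodic

open Complex ComplexConjugate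

section RootsOfUnity

variable {lam : ℂ} {M : ℕ}

theorem periodic_pow_of_pow_eq_one {α : Type*} (hpow : lam ^ M = 1) (φ : ℂ → α) :
    Function.Periodic (fun j : ℕ => φ (lam ^ j)) M := fun j => by
  simp only [pow_add, hpow, mul_one]

theorem conj_pow_eq_pow_sub (hpow : lam ^ M = 1) {j : ℕ} (hj : j < M) :
    conj (lam ^ j) = lam ^ (M - j) := by
  have hnorm : ‖lam‖ = 1 := norm_eq_one_of_pow_eq_one hpow (by omega)
  have hne : lam ≠ 0 := norm_ne_zero_iff.1 (by rw [hnorm]; exact one_ne_zero)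
  rw [pow_sub₀ lam hne hj.le, hpow, one_mul, Complex.inv_eq_conj (by rw [norm_pow, hnorm, one_pow])]

theorem sum_range_mul_one_sub_pow_eq_ofReal (hpow : lam ^ M = 1) (G : ℝ → ℝ) :
    ∑ j ∈ range M, (G ‖1 - lam ^ j‖ : ℂ) * (1 - lam ^ j)
      = ((∑ j ∈ range M, G ‖1 - lam ^ j‖ * (1 - (lam ^ j).re) : ℝ) : ℂ) := by
  set φ : ℂ → ℂ := fun w => (G ‖1 - w‖ : ℂ) * (1 - w)
  have hφ : ∀ w, conj (φ w) = φ (conj w) := fun w => by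
    simp only [φ, map_mul, Complex.conj_ofReal, map_sub, map_one]
    rw [← Complex.norm_conj (1 - w), map_sub, map_one]
  have hconj : conj (∑ j ∈ range M, φ (lam ^ j)) = ∑ j ∈ range M, φ (lam ^ j) := by
    rw [map_sum, ← (periodic_pow_of_pow_eq_one hpow φ).sum_range_reflect]
    exact sum_congr rfl fun j hj => by rw [hφ, conj_pow_eq_pow_sub hpow (mem_range.1 hj)]
  rw [← conj_eq_iff_re.1 hconj, re_sum]
  congr 1
  exact sum_congr rfl fun j _ => by simp only [φ, re_ofReal_mul, sub_re, one_re]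

theorem re_exp_two_pi_I_div_pow (M j : ℕ) :
    (exp (2 * Real.pi * I / M) ^ j).re = Real.cos (2 * Real.pi * j / M) := by
  rw [← exp_nat_mul, ← exp_ofReal_mul_I_re]
  congr 2
  push_cast
  ring

end RootsOfUnity

noncomputable def vortexVelocity {N : ℕ} (F : ℝ → ℝ) (z : Fin N → ℂ) (r : Fin N) : ℂ :=
  I * ∑ s ∈ univ.erase r, (F ‖z r - z s‖ : ℂ) * (z r - z s)

section Vortex

variable {N : ℕ} (F : ℝ → ℝ)

theorem vortexVelocity_eq_sum_univ (z : Fin N → ℂ) (r : Fin N) :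
    vortexVelocity F z r = I * ∑ s, (F ‖z r - z s‖ : ℂ) * (z r - z s) := by
  rw [vortexVelocity, sum_erase _ (by rw [sub_self, mul_zero])]

theorem vortexVelocity_mul_left {u : ℂ} (hu : ‖u‖ = 1) (z : Fin N → ℂ) (r : Fin N) :
    vortexVelocity F (fun s => u * z s) r = u * vortexVelocity F z r := by
  simp only [vortexVelocity, Finset.mul_sum]
  refine Finset.sum_congr rfl fun s _ => ?_
  rw [← mul_sub, norm_mul, hu, one_mul]
  ring

theorem hasDerivAt_rotation_of_relative_equilibrium {P : Fin N → ℂ} {Ω : ℝ}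
    (hP : ∀ r, vortexVelocity F P r = I * Ω * P r) (r : Fin N) (t : ℝ) :
    HasDerivAt (fun t : ℝ => exp (I * Ω * t) * P r)
      (vortexVelocity F (fun s => exp (I * Ω * t) * P s) r) t := by
  have hexp : HasDerivAt (fun t : ℝ => exp (I * Ω * t)) (I * Ω * exp (I * Ω * t)) t := by
    simpa [mul_comm] using
      (((hasDerivAt_id (t : ℂ)).const_mul (I * (Ω : ℂ))).cexp).comp_ofReal
  have hnorm : ‖exp (I * Ω * t)‖ = 1 := by
    rw [show I * Ω * t = ((Ω * t : ℝ) : ℂ) * I by push_cast; ring, norm_exp_ofReal_mul_I]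
  rw [vortexVelocity_mul_left F hnorm, hP, mul_left_comm, ← mul_assoc]
  exact hexp.mul_const (P r)

end Vortex

def filledPolygon (M : ℕ) (c lam : ℂ) : Fin (M + 1) → ℂ :=
  Fin.cons 0 fun k => c * lam ^ ((k : ℕ) + 1)

section FilledPolygon

variable {M : ℕ} {c lam : ℂ}

@[simp] theorem filledPolygon_zero : filledPolygon M c lam 0 = 0 := rfl

@[simp] theorem filledPolygon_succ (k : Fin M) :
    filledPolygon M c lam k.succ = c * lam ^ ((k : ℕ) + 1) := rfl

end FilledPolygon

theorem vortexVelocity_filledPolygon (F : ℝ → ℝ) {lam : ℂ} {M : ℕ} (hlam : IsPrimitiveRoot lam M)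
    (hM : 1 < M) (c : ℂ) (r : Fin (M + 1)) :
    vortexVelocity F (filledPolygon M c lam) r
      = I * (F ‖c‖ + ∑ j ∈ range M, (F (‖c‖ * ‖1 - lam ^ j‖) : ℂ) * (1 - lam ^ j))
        * filledPolygon M c lam r := by
  have hnorm : ‖lam‖ = 1 := hlam.norm'_eq_one (by omega)
  set x := filledPolygon M c lam r
  set ψ : ℂ → ℂ := fun w => (F ‖x - c * w‖ : ℂ) * (x - c * w)
  have hperiodic := periodic_pow_of_pow_eq_one hlam.pow_eq_one ψ
  have hsum : vortexVelocity F (filledPolygon M c lam) r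
      = I * ((F ‖x‖ : ℂ) * x + ∑ j ∈ range M, ψ (lam ^ j)) := by
    rw [vortexVelocity_eq_sum_univ, Fin.sum_univ_succ, ← hperiodic.sum_range_add 1]
    simp only [filledPolygon_zero, filledPolygon_succ, sub_zero, add_comm 1]
    exact congrArg _ (congrArg _ (Fin.sum_univ_eq_sum_range (fun j => ψ (lam ^ (j + 1))) M))
  rw [hsum]
  cases r using Fin.cases with
  | zero =>
    have hx : x = 0 := rfl
    have hterm : ∀ j, ψ (lam ^ j) = -(F ‖c‖ * c) * lam ^ j := fun j => by
      simp only [ψ, hx, zero_sub, norm_neg, norm_mul, norm_pow, hnorm, one_pow, mul_one]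
      ring
    simp only [hterm, ← mul_sum, hlam.geom_sum_eq_zero hM, hx]
    simp
  | succ k =>
    have hx : x = c * lam ^ ((k : ℕ) + 1) := rfl
    have hterm : ∀ j, ψ (lam ^ ((k : ℕ) + 1 + j))
        = (F (‖c‖ * ‖1 - lam ^ j‖) : ℂ) * (1 - lam ^ j) * x := fun j => by
      simp only [ψ, hx, pow_add, ← mul_assoc, ← mul_one_sub, norm_mul, norm_pow, hnorm,
        one_pow, mul_one]
      ring
    rw [← hperiodic.sum_range_add ((k : ℕ) + 1)]
    have hxnorm : ‖x‖ = ‖c‖ := by rw [hx, norm_mul, norm_pow, hnorm, one_pow, mul_one]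
    simp only [hterm, ← sum_mul, hxnorm]
    ring

/-- `M` vortices at the vertices of a regular `M`-gon of circumradius `σ`
rotating with frequency `Ω = F(σ) + Σ_{j=1}^{M−1} F(σ|1−λ^j|)(1 − cos(2πj/M))`
about an `(M+1)`-th vortex fixed at the centre solve the asymptotic vortex
equations for `N = M + 1` vortices. -/
theorem rotating_filled_polygon_solves (M : ℕ) (hM : 2 ≤ M) (F : ℝ → ℝ)
    (σ : ℝ) (hσ : 0 < σ)
    (lam : ℂ) (hlam : lam = Complex.exp (2 * Real.pi * Complex.I / M))
    (Ω : ℝ)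
    (hΩ : Ω = F σ + ∑ j ∈ Finset.Ico 1 M,
      F (σ * ‖1 - lam ^ j‖) * (1 - Real.cos (2 * Real.pi * j / M)))
    (z : Fin (M + 1) → ℝ → ℂ)
    (hz0 : ∀ t : ℝ, z 0 t = 0)
    (hz : ∀ r : Fin (M + 1), r ≠ 0 → ∀ t : ℝ,
      z r t = σ * lam ^ (r : ℕ) * Complex.exp (Complex.I * Ω * t)) :
    ∀ (t : ℝ) (r : Fin (M + 1)),
      HasDerivAt (z r)
        (Complex.I * ∑ s ∈ univ.erase r,
          (F (‖z r t - z s t‖) : ℂ) * (z r t - z s t)) t := by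
  intro t r
  have hprim : IsPrimitiveRoot lam M := hlam ▸ isPrimitiveRoot_exp M (by omega)
  have hcos : ∀ j : ℕ, (lam ^ j).re = Real.cos (2 * Real.pi * j / M) := by
    rw [hlam]
    exact re_exp_two_pi_I_div_pow M
  have hfreq : (F ‖(σ : ℂ)‖ : ℂ)
      + ∑ j ∈ range M, (F (‖(σ : ℂ)‖ * ‖1 - lam ^ j‖) : ℂ) * (1 - lam ^ j) = Ω := by
    have hreal := sum_range_mul_one_sub_pow_eq_ofReal hprim.pow_eq_one (fun x => F (σ * x))
    beta_reduce at hreal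
    rw [norm_real, Real.norm_of_nonneg hσ.le, hreal, hΩ, range_eq_Ico,
      sum_eq_sum_Ico_succ_bot (by omega)]
    simp [hcos]
  have hP : ∀ r, vortexVelocity F (filledPolygon M σ lam) r
      = I * Ω * filledPolygon M σ lam r := fun r => by
    rw [vortexVelocity_filledPolygon F hprim hM, hfreq]
  have hrot : z = fun s (t : ℝ) => exp (I * Ω * t) * filledPolygon M σ lam s := by
    funext s t
    cases s using Fin.cases with
    | zero => rw [hz0, filledPolygon_zero, mul_zero]
    | succ k => rw [hz _ (Fin.succ_ne_zero k), filledPolygon_succ, Fin.val_succ, mul_comm]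
  subst hrot
  exact hasDerivAt_rotation_of_relative_equilibrium F hP r t
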